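/- Let S be a subset of ω₁ such that cl(S) \ S is unbounded in ω₁ and S contains a set that is closed in ω₁ and unbounded (a cub set). Then K(S) is Tukey equivalent to Σ(ω^{ω₁}), i.e. K(S) ≥_T Σ(ω^{ω₁}) and Σ(ω^{ω₁}) ≥_T K(S). -/

import Mathlib

open Cardinal Set

universe u v

/-- `C` is cofinal for `P'` in `P`: every element of `P'` lies below some element of `C`. -/
def IsCofinalFor' {P : Type u} [Preorder P] (P' C : Set P) : Prop :=
  ∀ p ∈ P', ∃ c ∈ C, p ≤ c

/-- `φ : P → Q` is a relative Tukey quotient from `(P', P)` to `(Q', Q)`: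
it maps every subset of `P` cofinal for `P'` to a subset of `Q` cofinal for `Q'`. -/
def IsRelTukeyQuotient {P : Type u} {Q : Type v} [Preorder P] [Preorder Q]
    (P' : Set P) (Q' : Set Q) (φ : P → Q) : Prop :=
  ∀ C : Set P, IsCofinalFor' P' C → IsCofinalFor' Q' (φ '' C)

/-- `(P', P) ≥_T (Q', Q)`: there exists a relative Tukey quotient. -/
def RelTukeyGE {P : Type u} {Q : Type v} [Preorder P] [Preorder Q]
    (P' : Set P) (Q' : Set Q) : Prop :=
  ∃ φ : P → Q, IsRelTukeyQuotient P' Q' φ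

/-- `P ≥_T Q`: there is a Tukey quotient from `P` to `Q`. -/
def TukeyGE (P : Type u) (Q : Type v) [Preorder P] [Preorder Q] : Prop :=
  RelTukeyGE (Set.univ : Set P) (Set.univ : Set Q)

/-- `A` is unbounded in `P`: it has no upper bound in `P`. -/
def UnboundedIn {P : Type u} [Preorder P] (A : Set P) : Prop :=
  ¬ ∃ b : P, ∀ a ∈ A, a ≤ b

noncomputable section

/-- `ω₁`: the set of countable ordinals, as the canonical well-order of order type `ω₁`. -/
def O1 : Type := (Cardinal.aleph 1).ord.ToType

noncomputable instance : LinearOrder O1 :=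
  inferInstanceAs (LinearOrder (Cardinal.aleph 1).ord.ToType)

/-- `ω₁` carries its order topology. -/
instance : TopologicalSpace O1 := Preorder.topology O1

instance : OrderTopology O1 := ⟨rfl⟩

/-- `K(S)` for `S ⊆ ω₁`: the compact subsets of `S` (equivalently, compact subsets of `ω₁`
contained in `S`), ordered by inclusion. -/
def KS (S : Set O1) : Type := {K : Set O1 // K ⊆ S ∧ IsCompact K}

instance (S : Set O1) : PartialOrder (KS S) := Subtype.partialOrder _

/-- `A ⊆ ω₁` is bounded in `ω₁`. -/
def BddO1 (A : Set O1) : Prop := ∃ β : O1, ∀ x ∈ A, x ≤ β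

/-- `Σ(ω^{ω₁})`: the functions `f : ω₁ → ℕ` which vanish beyond some countable ordinal,
with the pointwise order. -/
def SigmaOm : Type := {f : O1 → ℕ // ∃ γ : O1, ∀ β : O1, γ < β → f β = 0}

instance : PartialOrder SigmaOm := Subtype.partialOrder _

/-!
Write `D = cl S \ S` and fix a cub `C ⊆ S`.

`Σ(ω^{ω₁}) ≤_T K(S)`: the points of `D` that come first after some point of `C` are unbounded,
hence there are `ω₁` of them, and they give `ω₁` pairwise disjoint intervals `[c_β, η_β]` with
`c_β ∈ C` and `η_β ∈ D`. In each, choose points of `S` converging to `η_β`, and send `f` to the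
closure of the set of the `f(β)`-th points. A point of `C` lies between any two of these, so all
new limit points are in `C ⊆ S`. Conversely a compact `K ⊆ S` contains only finitely many points
of each sequence, as `η_β ∉ S`, and meets only countably many of the intervals, as `K` is
countable; this bounds the preimage.

`K(S) ≤_T Σ(ω^{ω₁})`: at each `γ`, code `K` by the index of its last point below `γ` (under an
injection of `[0, γ)` into `ℕ`) when `K` meets the gap of `C` just below `γ`, and mark `max K`.
If the codes of a family are bounded by `h`, then only the finitely many points of index at most
`h(z)` can occur near `z ∈ D` from that gap, so the closure of the union of the family stays
inside `S`, and the marks bound the union.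
-/

open Filter Function Topology

def IsTukeyMap {P : Type u} {Q : Type v} [Preorder P] [Preorder Q] (g : Q → P) : Prop :=
  ∀ A : Set Q, BddAbove (g '' A) → BddAbove A

theorem IsTukeyMap.tukeyGE {P : Type u} {Q : Type v} [Preorder P] [Preorder Q] {g : Q → P}
    (hg : IsTukeyMap g) : TukeyGE P Q := by
  choose φ hφ using fun p : P ↦ hg {q | g q ≤ p} ⟨p, by rintro _ ⟨q, hq, rfl⟩; exact hq⟩
  refine ⟨φ, fun C hC q _ ↦ ?_⟩
  obtain ⟨c, hc, hqc⟩ := hC (g q) trivial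
  exact ⟨φ c, mem_image_of_mem φ hc, hφ c hqc⟩

theorem countable_setOf_inter_nonempty {ι α : Type*} {s : ι → Set α}
    (hs : Pairwise (Disjoint on s)) {K : Set α} (hK : K.Countable) :
    {i | (s i ∩ K).Nonempty}.Countable := by
  refine (hK.biUnion fun k _ ↦ Subsingleton.countable (s := {i | k ∈ s i}) ?_).mono ?_
  · exact fun i hi j hj ↦ hs.eq (not_disjoint_iff.2 ⟨k, hi, hj⟩)
  · rintro i ⟨k, hki, hkK⟩
    exact mem_biUnion hkK hki

theorem bddAbove_support_iff {α M : Type*} [LinearOrder α] [Zero M] {f : α → M} :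
    BddAbove (support f) ↔ ∃ γ, ∀ β, γ < β → f β = 0 := by
  refine exists_congr fun γ ↦ ⟨fun h β hβ ↦ ?_, fun h β hβ ↦ le_of_not_gt fun hγβ ↦ hβ (h β hγβ)⟩
  exact by_contra fun hne ↦ (h hne).not_gt hβ

section WellOrder

variable {α : Type*} [LinearOrder α] [TopologicalSpace α] [OrderTopology α]
  [SuccOrder α] [NoMaxOrder α] {A T C : Set α} {z : α}

theorem dense_below_of_mem_closure_of_notMem (hz : z ∈ closure A) (hzA : z ∉ A) :
    ¬IsMin z ∧ ∀ y < z, (A ∩ Ioo y z).Nonempty := by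
  rw [← SuccOrder.accPt_principal, accPt_principal_iff_clusterPt, sdiff_singleton_eq_self hzA]
  exact mem_closure_iff_clusterPt.1 hz

theorem mem_closure_of_dense_below (hz : ¬IsMin z) (hA : ∀ y < z, (A ∩ Ioo y z).Nonempty) :
    z ∈ closure A :=
  mem_closure_iff_clusterPt.2 (SuccOrder.accPt_principal.2 ⟨hz, hA⟩).clusterPt

theorem closure_subset_union_of_interleaved (hC : IsClosed C)
    (hTC : ∀ t₁ ∈ T, ∀ t₂ ∈ T, t₁ < t₂ → (C ∩ Ioo t₁ t₂).Nonempty) : closure T ⊆ T ∪ C := by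
  intro z hz
  by_cases hzT : z ∈ T
  · exact Or.inl hzT
  obtain ⟨hmin, hdense⟩ := dense_below_of_mem_closure_of_notMem hz hzT
  refine Or.inr (hC.closure_subset (mem_closure_of_dense_below hmin fun y hy ↦ ?_))
  obtain ⟨t₁, ht₁, hyt₁, ht₁z⟩ := hdense y hy
  obtain ⟨t₂, ht₂, ht₁t₂, ht₂z⟩ := hdense t₁ ht₁z
  obtain ⟨c, hc, hc₁, hc₂⟩ := hTC t₁ ht₁ t₂ ht₂ ht₁t₂
  exact ⟨c, hc, hyt₁.trans hc₁, hc₂.trans ht₂z⟩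

end WellOrder

theorem IsClosed.isCompact_of_bddAbove {α : Type*} [Preorder α] [OrderBot α] [TopologicalSpace α]
    [CompactIccSpace α] {K : Set α} (hK : IsClosed K) (hb : BddAbove K) : IsCompact K := by
  obtain ⟨b, hb⟩ := hb
  exact isCompact_Icc.of_isClosed_subset hK fun x hx ↦ ⟨bot_le, hb hx⟩

section LastBelow

variable {α : Type*} [ConditionallyCompleteLinearOrderBot α] {A : Set α} {a z : α}

def lastBelow (A : Set α) (z : α) : α := sSup (A ∩ Iio z)

theorem le_lastBelow (ha : a ∈ A) (haz : a < z) : a ≤ lastBelow A z :=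
  le_csSup ⟨z, fun _ hx ↦ hx.2.le⟩ ⟨ha, haz⟩

theorem lastBelow_lt [TopologicalSpace α] [OrderTopology α] (hA : IsClosed A) (hzA : z ∉ A)
    (hz : ¬IsMin z) : lastBelow A z < z := by
  unfold lastBelow
  refine (csSup_le' fun _ hx ↦ hx.2.le).lt_of_ne fun heq ↦ ?_
  rcases (A ∩ Iio z).eq_empty_or_nonempty with hempty | hne
  · rw [hempty, csSup_empty] at heq
    exact hz (heq ▸ isMin_bot)
  · have hmem := csSup_mem_closure hne ⟨z, fun _ hx ↦ hx.2.le⟩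
    rw [heq] at hmem
    exact hzA (hA.closure_subset (closure_mono inter_subset_left hmem))

end LastBelow

instance : WellFoundedLT O1 := inferInstanceAs (WellFoundedLT (Cardinal.aleph 1).ord.ToType)

instance : Nonempty O1 :=
  Ordinal.nonempty_toType_iff.2 Cardinal.isRegular_aleph_one.ord_pos.ne'

instance : OrderBot O1 := WellFoundedLT.toOrderBot O1

instance : ConditionallyCompleteLinearOrderBot O1 :=
  WellFoundedLT.conditionallyCompleteLinearOrderBot O1

instance : SuccOrder O1 := inferInstanceAs (SuccOrder (Cardinal.aleph 1).ord.ToType)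

instance : NoMaxOrder O1 :=
  Ordinal.isSuccPrelimit_type_lt_iff (α := (Cardinal.aleph 1).ord.ToType) |>.1 <| by
    rw [Ordinal.type_toType]
    exact (Cardinal.isSuccLimit_ord (Cardinal.aleph0_le_aleph 1)).isSuccPrelimit

namespace O1

theorem mk_eq : #O1 = ℵ₁ :=
  (Cardinal.mk_toType _).trans (Cardinal.card_ord _)

theorem countable_Iio (x : O1) : (Iio x).Countable := by
  have h : #(Iio x) < ℵ₁ :=
    mk_eq ▸ Cardinal.mk_Iio_lt x (by rw [mk_eq]; exact (Ordinal.type_toType _).symm)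
  rw [← Cardinal.succ_aleph0, Order.lt_succ_iff] at h
  exact Cardinal.le_aleph0_iff_set_countable.1 h

theorem aleph_one_le_mk_of_not_bddAbove {s : Set O1} (hs : ¬BddAbove s) : ℵ₁ ≤ #s := by
  have hcof : Order.cof O1 = ℵ₁ :=
    (Ordinal.cof_toType _).trans Cardinal.isRegular_aleph_one.cof_ord
  exact hcof ▸ Order.cof_le (IsCofinal.of_not_bddAbove hs)

theorem countable_iff_bddAbove {s : Set O1} : s.Countable ↔ BddAbove s := by
  refine ⟨fun hs ↦ by_contra fun h ↦ ?_, fun ⟨b, hb⟩ ↦ ?_⟩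
  · exact (Cardinal.le_aleph0_iff_set_countable.2 hs).not_gt
      (Cardinal.aleph0_lt_aleph_one.trans_le (aleph_one_le_mk_of_not_bddAbove h))
  · refine ((countable_Iio b).insert b).mono ?_
    rw [Iio_insert]
    exact fun _ hx ↦ hb hx

theorem nonempty_embedding_of_not_bddAbove {s : Set O1} (hs : ¬BddAbove s) :
    Nonempty (O1 ↪ s) := by
  rw [← Cardinal.le_def, mk_eq]
  exact aleph_one_le_mk_of_not_bddAbove hs

end O1

section Ladders

variable {S C D : Set O1}

structure LadderSystem (S C : Set O1) where
  base : O1 → O1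
  limit : O1 → O1
  rung : O1 → ℕ → O1
  base_mem : ∀ β, base β ∈ C
  limit_notMem : ∀ β, limit β ∉ S
  rung_mem : ∀ β n, rung β n ∈ S ∩ Ioo (base β) (limit β)
  tendsto_rung : ∀ β, Tendsto (rung β) atTop (𝓝 (limit β))
  pairwise_disjoint : Pairwise (Disjoint on fun β ↦ Icc (base β) (limit β))

def firstAfter (D C : Set O1) : Set O1 := {η | ∃ c ∈ C, IsLeast (D ∩ Ioi c) η}

theorem not_bddAbove_firstAfter (hC : ¬BddAbove C) (hD : ¬BddAbove D) :
    ¬BddAbove (firstAfter D C) := by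
  refine not_bddAbove_iff.2 fun y ↦ ?_
  obtain ⟨c, hc, hyc⟩ := not_bddAbove_iff.1 hC y
  obtain ⟨d, hd, hcd⟩ := not_bddAbove_iff.1 hD c
  have hne : (D ∩ Ioi c).Nonempty := ⟨d, hd, hcd⟩
  exact ⟨sInf (D ∩ Ioi c), ⟨c, hc, csInf_mem hne, fun _ hx ↦ csInf_le (OrderBot.bddBelow _) hx⟩,
    hyc.trans (csInf_mem hne).2⟩

theorem lt_of_isLeast_inter_Ioi (hDC : Disjoint D C) {c η η' : O1} (hc : c ∈ C)
    (hη' : IsLeast (D ∩ Ioi c) η') (hη : η ∈ D) (hlt : η < η') : η < c := by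
  rcases lt_trichotomy η c with h | rfl | h
  · exact h
  · exact absurd hc (hDC.notMem_of_mem_left hη)
  · exact absurd (hη'.2 ⟨hη, h⟩) hlt.not_ge

theorem exists_pairwise_disjoint_Icc (hDC : Disjoint D C) (hC : ¬BddAbove C)
    (hD : ¬BddAbove D) :
    ∃ c η : O1 → O1, (∀ β, c β ∈ C ∧ η β ∈ D ∧ c β < η β) ∧
      Pairwise (Disjoint on fun β ↦ Icc (c β) (η β)) := by
  obtain ⟨ι⟩ := O1.nonempty_embedding_of_not_bddAbove (not_bddAbove_firstAfter hC hD)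
  choose w hwC hw using fun η : firstAfter D C ↦ η.2
  have hdisj : Pairwise (Disjoint on fun η : firstAfter D C ↦ Icc (w η) η) := by
    refine (pairwise_disjoint_on _).2 fun η η' hlt ↦ disjoint_left.2 fun x hx hx' ↦ ?_
    exact (hx.2.trans_lt (lt_of_isLeast_inter_Ioi hDC (hwC η') (hw η') (hw η).1.1 hlt)).not_ge
      hx'.1
  exact ⟨fun β ↦ w (ι β), fun β ↦ ι β, fun β ↦ ⟨hwC _, (hw _).1.1, (hw _).1.2⟩,
    hdisj.comp_of_injective ι.injective⟩

theorem exists_tendsto_of_mem_closure_diff {c η : O1} (hη : η ∈ closure S \ S) (hc : c < η) :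
    ∃ L : ℕ → O1, (∀ n, L n ∈ S ∩ Ioo c η) ∧ Tendsto L atTop (𝓝 η) := by
  obtain ⟨-, hdense⟩ := dense_below_of_mem_closure_of_notMem hη.1 hη.2
  obtain ⟨r, hr⟩ := (O1.countable_Iio η).exists_eq_range ⟨c, hc⟩
  have hrη : ∀ k, r k < η := fun k ↦ (hr ▸ mem_range_self k : r k ∈ Iio η)
  let m : ℕ → O1 := fun n ↦ c ⊔ (Finset.range (n + 1)).sup r
  have hm : ∀ n, m n < η := fun n ↦
    max_lt hc ((Finset.sup_lt_iff (bot_le.trans_lt hc)).2 fun k _ ↦ hrη k)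
  choose L hLS hL using fun n ↦ hdense (m n) (hm n)
  refine ⟨L, fun n ↦ ⟨hLS n, le_sup_left.trans_lt (hL n).1, (hL n).2⟩,
    tendsto_order.2 ⟨fun a ha ↦ ?_, fun a ha ↦ .of_forall fun n ↦ (hL n).2.trans ha⟩⟩
  obtain ⟨k, rfl⟩ : a ∈ range r := hr ▸ ha
  refine eventually_atTop.2 ⟨k, fun n hn ↦ ?_⟩
  exact (Finset.le_sup (f := r) (Finset.mem_range.2 (Nat.lt_succ_of_le hn))).trans_lt
    (le_sup_right.trans_lt (hL n).1)

theorem LadderSystem.nonempty (hCS : C ⊆ S) (hC : ¬BddAbove C)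
    (hD : ¬BddAbove (closure S \ S)) : Nonempty (LadderSystem S C) := by
  obtain ⟨c, η, hcη, hdisj⟩ :=
    exists_pairwise_disjoint_Icc (disjoint_sdiff_left.mono_right hCS) hC hD
  choose L hL hLη using fun β ↦ exists_tendsto_of_mem_closure_diff (hcη β).2.1 (hcη β).2.2
  exact ⟨⟨c, η, L, fun β ↦ (hcη β).1, fun β ↦ (hcη β).2.1.2, hL, hLη, hdisj⟩⟩

namespace LadderSystem

variable (L : LadderSystem S C)

def trace (f : O1 → ℕ) : Set O1 := (fun β ↦ L.rung β (f β)) '' support f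

theorem inter_Ioo_nonempty_of_mem_trace {f : O1 → ℕ} {t₁ t₂ : O1} (h₁ : t₁ ∈ L.trace f)
    (h₂ : t₂ ∈ L.trace f) (hlt : t₁ < t₂) : (C ∩ Ioo t₁ t₂).Nonempty := by
  obtain ⟨β₁, -, rfl⟩ := h₁
  obtain ⟨β₂, -, rfl⟩ := h₂
  have hne : β₁ ≠ β₂ := by
    rintro rfl
    exact hlt.false
  have hβ₁ := (L.rung_mem β₁ (f β₁)).2
  have hβ₂ := (L.rung_mem β₂ (f β₂)).2
  refine ⟨L.base β₂, L.base_mem β₂, lt_of_not_ge fun hle ↦ ?_, hβ₂.1⟩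
  exact (L.pairwise_disjoint hne).ne_of_mem ⟨hβ₁.1.le, hβ₁.2.le⟩ ⟨hle, hlt.le.trans hβ₂.2.le⟩ rfl

theorem closure_trace_subset (hC : IsClosed C) (hCS : C ⊆ S) (f : O1 → ℕ) :
    closure (L.trace f) ⊆ S := by
  refine (closure_subset_union_of_interleaved hC fun _ h₁ _ h₂ ↦
    L.inter_Ioo_nonempty_of_mem_trace h₁ h₂).trans (union_subset ?_ hCS)
  rintro _ ⟨β, -, rfl⟩
  exact (L.rung_mem β _).1

theorem bddAbove_trace {f : O1 → ℕ} (hf : BddAbove (support f)) : BddAbove (L.trace f) :=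
  O1.countable_iff_bddAbove.1 ((O1.countable_iff_bddAbove.2 hf).image _)

theorem finite_setOf_rung_mem {K : Set O1} (hK : IsClosed K) (hKS : K ⊆ S) (β : O1) :
    {n | L.rung β n ∈ K}.Finite := by
  by_contra hinf
  exact L.limit_notMem β <| hKS <| hK.mem_of_frequently_of_tendsto
    (Nat.frequently_atTop_iff_infinite.2 hinf) (L.tendsto_rung β)

def toKS (hC : IsClosed C) (hCS : C ⊆ S) (f : SigmaOm) : KS S :=
  ⟨closure (L.trace f.1), L.closure_trace_subset hC hCS f.1,
    isClosed_closure.isCompact_of_bddAbove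
      (L.bddAbove_trace (bddAbove_support_iff.2 f.2)).closure⟩

theorem isTukeyMap_toKS (hC : IsClosed C) (hCS : C ⊆ S) : IsTukeyMap (L.toKS hC hCS) := by
  rintro A ⟨K, hK⟩
  let h : O1 → ℕ := fun β ↦ sSup {n | L.rung β n ∈ K.1}
  have hsupp : support h ⊆ {β | (Icc (L.base β) (L.limit β) ∩ K.1).Nonempty} := by
    intro β hβ
    obtain ⟨n, hn⟩ : {n | L.rung β n ∈ K.1}.Nonempty := by
      by_contra hemp
      rw [not_nonempty_iff_eq_empty] at hemp
      exact hβ (by simp [h, hemp])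
    exact ⟨L.rung β n, Ioo_subset_Icc_self (L.rung_mem β n).2, hn⟩
  have hbdd : BddAbove (support h) := O1.countable_iff_bddAbove.1 <|
    (countable_setOf_inter_nonempty L.pairwise_disjoint
      (O1.countable_iff_bddAbove.2 K.2.2.bddAbove)).mono hsupp
  refine ⟨⟨h, bddAbove_support_iff.1 hbdd⟩, fun f hf β ↦ ?_⟩
  by_cases hβ : f.1 β = 0
  · simp [hβ]
  have hmem : L.rung β (f.1 β) ∈ K.1 := hK ⟨f, hf, rfl⟩ (subset_closure ⟨β, hβ, rfl⟩)
  exact le_csSup (L.finite_setOf_rung_mem K.2.2.isClosed K.2.1 β).bddAbove hmem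

end LadderSystem

end Ladders

section GapCode

variable {S C : Set O1}

def rankBelow (z : O1) : O1 → ℕ :=
  (countable_iff_exists_injOn.1 (O1.countable_Iio z)).choose

theorem injOn_rankBelow (z : O1) : InjOn (rankBelow z) (Iio z) :=
  (countable_iff_exists_injOn.1 (O1.countable_Iio z)).choose_spec

theorem finite_setOf_rankBelow_le (z : O1) (N : ℕ) :
    {x | x < z ∧ rankBelow z x ≤ N}.Finite :=
  Finite.of_finite_image ((finite_Iic N).subset (by rintro _ ⟨x, hx, rfl⟩; exact hx.2))
    ((injOn_rankBelow z).mono fun _ hx ↦ hx.1)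

open Classical in
def gapCode (C K : Set O1) (γ : O1) : ℕ :=
  (if (K ∩ Ioo (lastBelow C γ) γ).Nonempty then rankBelow γ (lastBelow K γ) + 1 else 0) +
    if γ = sSup K then 1 else 0

theorem bddAbove_support_gapCode (hC : ¬BddAbove C) {K : Set O1} (hK : BddAbove K) :
    BddAbove (support (gapCode C K)) := by
  obtain ⟨c, hc, hKc⟩ := not_bddAbove_iff.1 hC (sSup K)
  refine ⟨c, fun γ hγ ↦ le_of_not_gt fun hcγ ↦ hγ ?_⟩
  have hgap : ¬(K ∩ Ioo (lastBelow C γ) γ).Nonempty := fun ⟨x, hxK, hx, _⟩ ↦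
    ((le_csSup hK hxK).trans_lt (hKc.trans_le (le_lastBelow hc hcγ))).not_ge hx.le
  simp [gapCode, hgap, (hKc.trans hcγ).ne']

theorem closure_sUnion_subset_of_gapCode_le (hC : IsClosed C) (hCS : C ⊆ S)
    {𝒦 : Set (Set O1)} (h𝒦 : ∀ K ∈ 𝒦, K ⊆ S ∧ IsClosed K) {N : O1 → ℕ}
    (hN : ∀ K ∈ 𝒦, ∀ γ, gapCode C K γ ≤ N γ) : closure (⋃₀ 𝒦) ⊆ S := by
  intro z hz
  by_contra hzS
  obtain ⟨hmin, hdense⟩ :=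
    dense_below_of_mem_closure_of_notMem hz fun ⟨K, hK, hzK⟩ ↦ hzS ((h𝒦 K hK).1 hzK)
  let F := insert (lastBelow C z) {x | x < z ∧ rankBelow z x ≤ N z}
  have hF : F.Finite := (finite_setOf_rankBelow_le z (N z)).insert _
  have hFz : sSup F < z := by
    refine (hF.csSup_lt_iff (insert_nonempty _ _)).2 fun x hx ↦ ?_
    rcases hx with rfl | hx
    · exact lastBelow_lt hC (fun h ↦ hzS (hCS h)) hmin
    · exact hx.1
  obtain ⟨u, ⟨K, hK, huK⟩, hFu, huz⟩ := hdense _ hFz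
  have hgap : (K ∩ Ioo (lastBelow C z) z).Nonempty :=
    ⟨u, huK, (le_csSup hF.bddAbove (mem_insert _ _)).trans_lt hFu, huz⟩
  have hrank : rankBelow z (lastBelow K z) + 1 ≤ N z := by
    have := hN K hK z
    simp only [gapCode, if_pos hgap] at this
    omega
  have hlast : lastBelow K z ∈ F := mem_insert_of_mem _
    ⟨lastBelow_lt (h𝒦 K hK).2 (fun h ↦ hzS ((h𝒦 K hK).1 h)) hmin, by omega⟩
  exact (hFu.trans_le ((le_lastBelow huK huz).trans (le_csSup hF.bddAbove hlast))).false

def toSigma (hC : ¬BddAbove C) (K : KS S) : SigmaOm :=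
  ⟨gapCode C K.1, bddAbove_support_iff.1 (bddAbove_support_gapCode hC K.2.2.bddAbove)⟩

theorem isTukeyMap_toSigma (hC : IsClosed C) (hCS : C ⊆ S) (hCunb : ¬BddAbove C) :
    IsTukeyMap (toSigma (S := S) hCunb) := by
  rintro B ⟨h, hh⟩
  obtain ⟨γ, hγ⟩ := bddAbove_support_iff.2 h.2
  have hle : ∀ K ∈ B, ∀ β, gapCode C K.1 β ≤ h.1 β := fun K hK ↦ hh ⟨K, hK, rfl⟩
  have hsub : ∀ K ∈ B, K.1 ⊆ Iic γ := by
    intro K hK x hx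
    have hmark : 1 ≤ h.1 (sSup K.1) :=
      (by simp [gapCode] : 1 ≤ gapCode C K.1 (sSup K.1)).trans (hle K hK _)
    exact (le_csSup K.2.2.bddAbove hx).trans (hγ (mem_support.2 (by omega)))
  let U := ⋃₀ (Subtype.val '' B)
  have hUS : closure U ⊆ S := closure_sUnion_subset_of_gapCode_le hC hCS
    (by rintro _ ⟨K, -, rfl⟩; exact ⟨K.2.1, K.2.2.isClosed⟩)
    (by rintro _ ⟨K, hK, rfl⟩; exact hle K hK)
  have hU : BddAbove U := ⟨γ, by rintro x ⟨_, ⟨K, hK, rfl⟩, hx⟩; exact hsub K hK hx⟩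
  refine ⟨⟨closure U, hUS, isClosed_closure.isCompact_of_bddAbove hU.closure⟩,
    fun K hK ↦ ?_⟩
  exact (subset_sUnion_of_mem (mem_image_of_mem _ hK)).trans subset_closure

end GapCode

/-- If `S ⊆ ω₁` is such that `cl(S) \ S` is unbounded in `ω₁` and `S` contains a cub set,
then `K(S)` is Tukey equivalent to `Σ(ω^{ω₁})`. -/
theorem statement15 (S : Set O1)
    (h1 : ¬ BddO1 (closure S \ S))
    (h2 : ∃ C : Set O1, C ⊆ S ∧ IsClosed C ∧ ¬ BddO1 C) :
    TukeyGE (KS S) SigmaOm ∧ TukeyGE SigmaOm (KS S) := by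
  obtain ⟨C, hCS, hC, hCunb⟩ := h2
  obtain ⟨L⟩ := LadderSystem.nonempty hCS hCunb h1
  exact ⟨(L.isTukeyMap_toKS hC hCS).tukeyGE, (isTukeyMap_toSigma hC hCS hCunb).tukeyGE⟩
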